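/- arXiv:2509.25604 — 2 statements merged into one kernel-verified Lean document; each statement's English description precedes it below -/
import Mathlib

section
/- Let $p_\theta$ and $p_{\mathrm{ref}}$ be two reverse-factorized trajectory distributions on a finite state space with strictly positive transition probabilities, and define the trajectory reward $r_\theta(x_{0:T}) := \beta \log \frac{p_\theta(x_{0:T})}{p_{\mathrm{ref}}(x_{0:T})}$ and, for each $t$, $Q_\theta^t(x_{t-1}, x_{t:T}) := \sum_{i=t}^T \beta \log \frac{p_\theta(x_{i-1}\mid x_i)}{p_{\mathrm{ref}}(x_{i-1}\mid x_i)}$. Then $Q_\theta^t(x_{t-1}, x_{t:T}) = \beta \log \mathbb{E}_{p_{\mathrm{ref}}(x_{0:t-2}\mid x_{t-1})}\left[ e^{r_\theta(x_{0:T})/\beta} \right]$, i.e., $Q^t$ equals $\beta$ times the log of the conditional expectation under $p_{\mathrm{ref}}$ of the exponentiated (scaled) trajectory reward given the suffix $x_{t-1:T}$. -/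
/-! Fix the suffix `x_{t-1:T}`. On each prefix, `p_ref(x_{0:t-2} | x_{t-1}) · p_θ / p_ref` loses
the common marginal `p(x_T)` and the reference transitions of the prefix, leaving the `p_θ`
prefix weight times `∏_{i ≥ t} p_θ(x_{i-1} | x_i) / p_ref(x_{i-1} | x_i) = exp (Q^t / β)`.
The `p_θ` prefix weights sum to `1`, as one sees by summing out `x_0, x_1, …` in turn, each
time using that `p_θ(· | x_i)` is a probability vector. -/

open Finset

namespace Trajectory

variable {X : Type*} {T : ℕ}

def prefixWeight (k : X → X → ℝ) (m : ℕ) (y : Fin (T + 1) → X) : ℝ :=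
  ∏ i : Fin T, if (i : ℕ) < m then k (y i.succ) (y i.castSucc) else 1

def trajProb (pT : X → ℝ) (k : X → X → ℝ) (y : Fin (T + 1) → X) : ℝ :=
  pT (y (Fin.last T)) * ∏ i : Fin T, k (y i.succ) (y i.castSucc)

-- For `m = t - 1` this is `exp (Q^t / β)`: factor `i` belongs to the transition `x_{i+1} → x_i`.
noncomputable def suffixRatio (kθ kref : X → X → ℝ) (m : ℕ) (x : Fin (T + 1) → X) : ℝ :=
  ∏ i : Fin T, if m ≤ (i : ℕ) then kθ (x i.succ) (x i.castSucc) / kref (x i.succ) (x i.castSucc)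
    else 1

theorem prefixWeight_succ (k : X → X → ℝ) (j : Fin T) (y : Fin (T + 1) → X) :
    prefixWeight k (j + 1) y = k (y j.succ) (y j.castSucc) * prefixWeight k j y := by
  rw [prefixWeight, prefixWeight, ← Fintype.prod_ite_eq' j (fun i => k (y i.succ) (y i.castSucc)),
    ← prod_mul_distrib]
  refine prod_congr rfl fun i _ => ?_
  rcases lt_trichotomy i j with h | rfl | h
  · simp [h.ne, Fin.lt_def.mp h, Nat.lt_succ_of_lt (Fin.lt_def.mp h)]
  · simp
  · simp [h.ne', (Fin.lt_def.mp h).not_gt, show ¬ (i : ℕ) < j + 1 by omega]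

theorem prefixWeight_mul_trajProb_div {pT : X → ℝ} {kθ kref : X → X → ℝ}
    (hpT : ∀ a, pT a ≠ 0) (hkref : ∀ a b, kref a b ≠ 0) {m : ℕ} {x y : Fin (T + 1) → X}
    (hy : ∀ i : Fin (T + 1), m ≤ (i : ℕ) → y i = x i) :
    prefixWeight kref m y * (trajProb pT kθ y / trajProb pT kref y) =
      prefixWeight kθ m y * suffixRatio kθ kref m x := by
  rw [trajProb, trajProb, mul_div_mul_left _ _ (hpT _), ← prod_div_distrib, prefixWeight,
    prefixWeight, suffixRatio, ← prod_mul_distrib, ← prod_mul_distrib]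
  refine prod_congr rfl fun i _ => ?_
  by_cases hi : (i : ℕ) < m
  · simp [hi, not_le.mpr hi, mul_div_cancel₀ _ (hkref _ _)]
  · rw [hy i.succ (by simp; omega), hy i.castSucc (by simp; omega)]
    simp [hi, not_lt.mp hi]

theorem trajProb_pos {pT : X → ℝ} {k : X → X → ℝ} (hpT : ∀ a, 0 < pT a) (hk : ∀ a b, 0 < k a b)
    (y : Fin (T + 1) → X) : 0 < trajProb pT k y :=
  mul_pos (hpT _) (prod_pos fun _ _ => hk _ _)

section cylinder

variable [Fintype X] [DecidableEq X]

def cylinder (m : ℕ) (x : Fin (T + 1) → X) : Finset (Fin (T + 1) → X) :=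
  univ.filter fun y => ∀ i : Fin (T + 1), m ≤ (i : ℕ) → y i = x i

@[simp]
theorem mem_cylinder {m : ℕ} {x y : Fin (T + 1) → X} :
    y ∈ cylinder m x ↔ ∀ i : Fin (T + 1), m ≤ (i : ℕ) → y i = x i := by
  simp [cylinder]

theorem cylinder_zero (x : Fin (T + 1) → X) : cylinder 0 x = {x} := by
  ext y
  simp [funext_iff]

theorem filter_cylinder_succ (j : Fin T) (x : Fin (T + 1) → X) (c : X) :
    (cylinder (j + 1) x).filter (fun y => y j.castSucc = c) =
      cylinder j (Function.update x j.castSucc c) := by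
  ext y
  simp only [mem_filter, mem_cylinder]
  constructor
  · rintro ⟨hy, rfl⟩ i hi
    rcases eq_or_ne i j.castSucc with rfl | hne
    · simp
    · rw [Function.update_of_ne hne]
      exact hy i (by have := Fin.val_ne_of_ne hne; simp at this; omega)
  · intro hy
    refine ⟨fun i hi => ?_, by simpa using hy j.castSucc le_rfl⟩
    have hne : i ≠ j.castSucc := by rintro rfl; simp at hi
    simpa [Function.update_of_ne hne] using hy i (by omega)

theorem sum_prefixWeight_cylinder {k : X → X → ℝ} (hk : ∀ a, ∑ b, k a b = 1) {m : ℕ}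
    (hm : m ≤ T) (x : Fin (T + 1) → X) :
    ∑ y ∈ cylinder m x, prefixWeight k m y = 1 := by
  induction m generalizing x with
  | zero => simp [cylinder_zero, prefixWeight]
  | succ m ih =>
    obtain ⟨j, rfl⟩ : ∃ j : Fin T, (j : ℕ) = m := ⟨⟨m, hm⟩, rfl⟩
    calc ∑ y ∈ cylinder (j + 1) x, prefixWeight k (j + 1) y
        = ∑ c, ∑ y ∈ (cylinder (j + 1) x).filter (fun y => y j.castSucc = c),
            k (y j.succ) (y j.castSucc) * prefixWeight k j y := by
          rw [sum_fiberwise]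
          exact sum_congr rfl fun y _ => prefixWeight_succ k j y
      _ = ∑ c, k (x j.succ) c * ∑ y ∈ cylinder j (Function.update x j.castSucc c),
            prefixWeight k j y := by
          refine sum_congr rfl fun c _ => ?_
          rw [filter_cylinder_succ, mul_sum]
          refine sum_congr rfl fun y hy => ?_
          rw [mem_cylinder] at hy
          rw [hy j.succ (by simp), hy j.castSucc le_rfl,
            Function.update_of_ne (Fin.castSucc_lt_succ (i := j)).ne', Function.update_self]
      _ = 1 := by simp only [ih j.is_lt.le, mul_one, hk]

theorem sum_cylinder_prefixWeight_mul_trajProb_div {pT : X → ℝ} {kθ kref : X → X → ℝ}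
    (hpT : ∀ a, pT a ≠ 0) (hkref : ∀ a b, kref a b ≠ 0) (hkθ : ∀ a, ∑ b, kθ a b = 1) {m : ℕ}
    (hm : m ≤ T) (x : Fin (T + 1) → X) :
    ∑ y ∈ cylinder m x, prefixWeight kref m y * (trajProb pT kθ y / trajProb pT kref y) =
      suffixRatio kθ kref m x := by
  rw [sum_congr rfl fun y hy => prefixWeight_mul_trajProb_div hpT hkref (mem_cylinder.mp hy),
    ← sum_mul, sum_prefixWeight_cylinder hkθ hm, one_mul]

end cylinder

theorem log_suffixRatio {kθ kref : X → X → ℝ} (hkθ : ∀ a b, 0 < kθ a b)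
    (hkref : ∀ a b, 0 < kref a b) (m : ℕ) (x : Fin (T + 1) → X) :
    Real.log (suffixRatio kθ kref m x) = ∑ i : Fin T,
      if m ≤ (i : ℕ) then Real.log (kθ (x i.succ) (x i.castSucc) / kref (x i.succ) (x i.castSucc))
      else 0 := by
  rw [suffixRatio, Real.log_prod fun i _ => by
    split_ifs
    exacts [(div_pos (hkθ _ _) (hkref _ _)).ne', one_ne_zero]]
  exact sum_congr rfl fun i _ => by split_ifs <;> simp

end Trajectory

open Trajectory in
theorem stmt_1_general {X : Type*} [Fintype X] [DecidableEq X] (T : ℕ) (β : ℝ) (hβ : 0 < β)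
    (pT : X → ℝ) (kθ kref : X → X → ℝ)
    (hpT : ∀ a, 0 < pT a) (hkθ : ∀ a b, 0 < kθ a b) (hkref : ∀ a b, 0 < kref a b)
    (hkθsum : ∀ a, ∑ b, kθ a b = 1)
    (t : ℕ) (ht2 : t ≤ T)
    (x : Fin (T + 1) → X) :
    (∑ i : Fin T, if t ≤ (i : ℕ) + 1 then
        β * Real.log (kθ (x i.succ) (x i.castSucc) / kref (x i.succ) (x i.castSucc))
      else 0) =
    β * Real.log (∑ y : Fin (T + 1) → X,
      if ∀ i : Fin (T + 1), t - 1 ≤ (i : ℕ) → y i = x i then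
        (∏ i : Fin T, if (i : ℕ) < t - 1 then kref (y i.succ) (y i.castSucc) else 1) *
          Real.exp ((β * Real.log
            ((pT (y (Fin.last T)) * ∏ i : Fin T, kθ (y i.succ) (y i.castSucc)) /
             (pT (y (Fin.last T)) * ∏ i : Fin T, kref (y i.succ) (y i.castSucc)))) / β)
      else 0) := by
  have hexp : ∀ y : Fin (T + 1) → X,
      Real.exp (β * Real.log (trajProb pT kθ y / trajProb pT kref y) / β) =
        trajProb pT kθ y / trajProb pT kref y := fun y => by
    rw [mul_div_cancel_left₀ _ hβ.ne',
      Real.exp_log (div_pos (trajProb_pos hpT hkθ y) (trajProb_pos hpT hkref y))]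
  trans β * Real.log (suffixRatio kθ kref (t - 1) x)
  · rw [log_suffixRatio hkθ hkref, mul_sum]
    refine sum_congr rfl fun i _ => ?_
    rw [mul_ite, mul_zero]
    exact if_congr (by omega) rfl rfl
  · rw [← sum_filter]
    refine congrArg (β * Real.log ·) ((sum_cylinder_prefixWeight_mul_trajProb_div
      (fun a => (hpT a).ne') (fun a b => (hkref a b).ne') hkθsum (by omega) x).symm.trans
      (sum_congr rfl fun y _ => ?_))
    exact congrArg (prefixWeight kref (t - 1) y * ·) (hexp y).symm

/-- `Q_θ^t` equals `β` times the log of the conditional expectation (under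
`p_ref`, conditioned on the suffix `x_{t-1:T}`) of the exponentiated scaled trajectory
reward `exp(r_θ(x_{0:T})/β)`.  Trajectories are maps `Fin (T+1) → X`; the trajectory
distribution factorizes as `p(x_T) ∏_{i=1}^T k(x_{i-1} | x_i)`, and the conditional
distribution of the prefix `x_{0:t-2}` given `x_{t-1:T}` has weight
`∏_{i=1}^{t-1} kref(x_{i-1}|x_i)`. -/
theorem stmt_1 {X : Type*} [Fintype X] [DecidableEq X] (T : ℕ) (β : ℝ) (hβ : 0 < β)
    (pT : X → ℝ) (kθ kref : X → X → ℝ)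
    (hpT : ∀ a, 0 < pT a) (hkθ : ∀ a b, 0 < kθ a b) (hkref : ∀ a b, 0 < kref a b)
    (hpTsum : ∑ a, pT a = 1)
    (hkθsum : ∀ a, ∑ b, kθ a b = 1) (hkrefsum : ∀ a, ∑ b, kref a b = 1)
    (t : ℕ) (ht1 : 1 ≤ t) (ht2 : t ≤ T)
    (x : Fin (T + 1) → X) :
    (∑ i : Fin T, if t ≤ (i : ℕ) + 1 then
        β * Real.log (kθ (x i.succ) (x i.castSucc) / kref (x i.succ) (x i.castSucc))
      else 0) =
    β * Real.log (∑ y : Fin (T + 1) → X,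
      if ∀ i : Fin (T + 1), t - 1 ≤ (i : ℕ) → y i = x i then
        (∏ i : Fin T, if (i : ℕ) < t - 1 then kref (y i.succ) (y i.castSucc) else 1) *
          Real.exp ((β * Real.log
            ((pT (y (Fin.last T)) * ∏ i : Fin T, kθ (y i.succ) (y i.castSucc)) /
             (pT (y (Fin.last T)) * ∏ i : Fin T, kref (y i.succ) (y i.castSucc)))) / β)
      else 0) :=
  stmt_1_general T β hβ pT kθ kref hpT hkθ hkref hkθsum t ht2 x
end

section
/- Let $p_\theta, p_{\mathrm{ref}}$ be strictly positive pmfs on a finite set $X$, and for $w \in \mathbb{R}$ let $p_w(x) \propto p_\theta(x)^{1+w} p_{\mathrm{ref}}(x)^{-w}$. Then the map $w \mapsto \mathbb{E}_{x \sim p_w}\left[ \log \frac{p_\theta(x)}{p_{\mathrm{ref}}(x)} \right]$ is monotone nondecreasing in $w$; in particular increasing the guidance strength $w$ never decreases the expected implicit reward $\log(p_\theta/p_{\mathrm{ref}})$ under the guided distribution. -/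
private lemma cheb {X : Type*} [Fintype X] (c f g : X → ℝ)
    (hc : ∀ x, 0 ≤ c x) (hfg : ∀ x y, 0 ≤ (f x - f y) * (g x - g y)) :
    (∑ x, c x * f x) * (∑ x, c x * g x) ≤ (∑ x, c x * (f x * g x)) * (∑ x, c x) := by
  have key : 0 ≤ ∑ x : X, ∑ y : X, c x * c y * ((f x - f y) * (g x - g y)) :=
    Finset.sum_nonneg fun x _ => Finset.sum_nonneg fun y _ =>
      mul_nonneg (mul_nonneg (hc x) (hc y)) (hfg x y)
  set T : X → X → ℝ := fun x y => c x * (f x * g x) * c y - (c x * f x) * (c y * g y) with hT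
  have hPS : (∑ x, c x * (f x * g x)) * (∑ x, c x) - (∑ x, c x * f x) * (∑ x, c x * g x)
      = ∑ x : X, ∑ y : X, T x y := by
    rw [Finset.sum_mul_sum, Finset.sum_mul_sum, ← Finset.sum_sub_distrib]
    exact Finset.sum_congr rfl fun x _ => by rw [← Finset.sum_sub_distrib]
  have hswap : ∑ x : X, ∑ y : X, T x y = ∑ x : X, ∑ y : X, T y x := Finset.sum_comm
  have hcomb : ∑ x : X, ∑ y : X, c x * c y * ((f x - f y) * (g x - g y))
      = ∑ x : X, ∑ y : X, (T x y + T y x) := by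
    refine Finset.sum_congr rfl fun x _ => Finset.sum_congr rfl fun y _ => ?_
    simp only [hT]; ring
  have : 0 ≤ 2 * ((∑ x, c x * (f x * g x)) * (∑ x, c x)
      - (∑ x, c x * f x) * (∑ x, c x * g x)) := by
    rw [hPS]
    calc (0:ℝ) ≤ ∑ x : X, ∑ y : X, c x * c y * ((f x - f y) * (g x - g y)) := key
      _ = ∑ x : X, ∑ y : X, (T x y + T y x) := hcomb
      _ = (∑ x : X, ∑ y : X, T x y) + ∑ x : X, ∑ y : X, T y x := by
          rw [← Finset.sum_add_distrib]
          exact Finset.sum_congr rfl fun x _ => Finset.sum_add_distrib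
      _ = 2 * ∑ x : X, ∑ y : X, T x y := by rw [← hswap]; ring
  linarith

/-- for the guided family `p_w(x) ∝ p_θ(x)^{1+w} p_ref(x)^{-w}`, the
expected implicit reward `E_{p_w}[log(p_θ/p_ref)]` is monotone nondecreasing in the
guidance strength `w`. -/
theorem stmt_12 {X : Type*} [Fintype X] [Nonempty X]
    (pθ pref : X → ℝ)
    (hpθ : ∀ x, 0 < pθ x ∧ pθ x ≤ 1) (hpref : ∀ x, 0 < pref x ∧ pref x ≤ 1)
    (hpθsum : ∑ x, pθ x = 1) (hprefsum : ∑ x, pref x = 1) :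
    Monotone (fun w : ℝ =>
      (∑ x, (pθ x ^ (1 + w) * pref x ^ (-w) /
          ∑ y, pθ y ^ (1 + w) * pref y ^ (-w)) * Real.log (pθ x / pref x))) := by
  set L : X → ℝ := fun x => Real.log (pθ x) - Real.log (pref x) with hL
  have hterm : ∀ (u : ℝ) (x : X),
      pθ x ^ (1 + u) * pref x ^ (-u) = pθ x * Real.exp (u * L x) := by
    intro u x
    have h1 : pθ x * Real.exp (u * L x) = Real.exp (Real.log (pθ x) + u * L x) := by
      rw [Real.exp_add, Real.exp_log (hpθ x).1]
    rw [h1, Real.rpow_def_of_pos (hpθ x).1, Real.rpow_def_of_pos (hpref x).1,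
      ← Real.exp_add]
    congr 1
    simp only [hL]; ring
  have hlog : ∀ x : X, Real.log (pθ x / pref x) = L x := fun x =>
    Real.log_div (ne_of_gt (hpθ x).1) (ne_of_gt (hpref x).1)
  intro w v hwv
  simp only [hterm, hlog]
  set cw : X → ℝ := fun x => pθ x * Real.exp (w * L x) with hcw
  set cv : X → ℝ := fun x => pθ x * Real.exp (v * L x) with hcv
  have hcwpos : ∀ x, 0 < cw x := fun x => mul_pos (hpθ x).1 (Real.exp_pos _)
  have hcvpos : ∀ x, 0 < cv x := fun x => mul_pos (hpθ x).1 (Real.exp_pos _)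
  have hSw : 0 < ∑ y, cw y := Finset.sum_pos (fun y _ => hcwpos y) Finset.univ_nonempty
  have hSv : 0 < ∑ y, cv y := Finset.sum_pos (fun y _ => hcvpos y) Finset.univ_nonempty
  have hrw : ∀ (c : X → ℝ), ∑ x, c x / (∑ y, c y) * L x = (∑ x, c x * L x) / (∑ y, c y) := by
    intro c
    rw [show (∑ x, c x / (∑ y, c y) * L x) = ∑ x, c x * L x / (∑ y, c y) from
      Finset.sum_congr rfl fun x _ => by ring, ← Finset.sum_div]
  show ∑ x, cw x / (∑ y, cw y) * L x ≤ ∑ x, cv x / (∑ y, cv y) * L x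
  rw [hrw cw, hrw cv, div_le_div_iff₀ hSw hSv]
  -- express cv via cw and g
  set g : X → ℝ := fun x => Real.exp ((v - w) * L x) with hg
  have hcvg : ∀ x, cv x = cw x * g x := by
    intro x
    simp only [hcv, hcw, hg, mul_assoc, ← Real.exp_add]
    congr 2
    ring
  have hfg : ∀ x y, 0 ≤ (L x - L y) * (g x - g y) := by
    intro x y
    rcases le_total (L x) (L y) with h | h
    · have hgle : g x ≤ g y := Real.exp_le_exp.mpr
        (mul_le_mul_of_nonneg_left h (by linarith))
      nlinarith
    · have hgle : g y ≤ g x := Real.exp_le_exp.mpr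
        (mul_le_mul_of_nonneg_left h (by linarith))
      exact mul_nonneg (by linarith) (by linarith)
  have := cheb cw L g (fun x => le_of_lt (hcwpos x)) hfg
  calc (∑ x, cw x * L x) * ∑ y, cv y
      = (∑ x, cw x * L x) * ∑ y, cw y * g y := by
        rw [Finset.sum_congr rfl fun y _ => hcvg y]
    _ ≤ (∑ x, cw x * (L x * g x)) * ∑ y, cw y := this
    _ = (∑ x, cv x * L x) * ∑ y, cw y := by
        congr 1
        exact Finset.sum_congr rfl fun x _ => by rw [hcvg x]; ring
end
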